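/- arXiv:2111.04708 — 8 statements merged into one kernel-verified Lean document; each statement's English description precedes it below -/
import Mathlib

section
/- Let A and B be groups, let B act transitively on a set I, and let W be a wreath-like product of A and B corresponding to this action, with canonical homomorphism ε: W → B. Let D ≤ B be a subgroup whose induced action on I is free, let V = ε⁻¹(D) be the full preimage of D in W, and let O denote the set of D-orbits in I. Then V is a regular wreath-like product of C and D, where C is the direct sum of |O|-many isomorphic copies of A. -/
/-- `W` is a wreath-like product of `A` and `B` corresponding to the action of `B` on `I`
(written `W ∈ WR(A, B ↷ I)`): it comes with a family of subgroups `𝒜 i`, each isomorphic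
to `A`, which pairwise commute elementwise, form an independent family, and generate the
kernel of the surjective canonical homomorphism `ε : W → B` (so their internal direct sum
is the base `ker ε`), and conjugation by `w ∈ W` carries `𝒜 i` onto `𝒜 (ε w • i)`.
A regular wreath-like product of `A` and `B` is the case `I = B` with the left
translation action of `B` on itself. -/
structure IsWreathLikeProduct (W A B I : Type*) [Group W] [Group A] [Group B]
    [MulAction B I] (𝒜 : I → Subgroup W) (ε : W →* B) : Prop where
  surjective : Function.Surjective ε
  isoA : ∀ i : I, Nonempty (𝒜 i ≃* A)
  commute : ∀ i j : I, i ≠ j → ∀ x ∈ 𝒜 i, ∀ y ∈ 𝒜 j, Commute x y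
  indep : ∀ i : I, Disjoint (𝒜 i) (⨆ (j : I) (_ : j ≠ i), 𝒜 j)
  base_eq : (⨆ i : I, 𝒜 i) = ε.ker
  conj_eq : ∀ (w : W) (i : I),
    Subgroup.map (MulAut.conj w).toMonoidHom (𝒜 i) = 𝒜 (ε w • i)

/-- The direct sum of `B`-many copies of the group `A`: the subgroup of the product group
`B → A` consisting of the finitely supported functions. -/
def FinSuppFun (B A : Type*) [Group A] : Subgroup (B → A) where
  carrier := {f | (Function.mulSupport f).Finite}
  one_mem' := by simp [Function.mulSupport_one]
  mul_mem' := by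
    intro f g hf hg
    exact (Set.Finite.union hf hg).subset (Function.mulSupport_mul f g)
  inv_mem' := by
    intro f hf
    simpa [Function.mulSupport_inv] using hf

/-!
Since `D` acts freely, `(d, o) ↦ d • o.out` identifies `D × O` with `I`, so the factors `A_i`
of the base group fall into the blocks `R_d = ⨆ₒ A_{d • o.out}`, which conjugation by
`v ∈ ε⁻¹(D)` permutes as left translation by `ε v` permutes `D`. The base `ker ε` is the
internal direct sum of the `A_i`, hence also of the blocks, and each block is the internal
direct sum of `|O|` copies of `A`. Both direct sum statements come from the multiplication map
from finitely supported sections `i ↦ h_i ∈ H_i` to `G`, a homomorphism because distinct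
factors commute and injective because they are independent.
-/

open Function MulAction

theorem Finset.noncommProd_subset {ι G : Type*} [Monoid G] {s t : Finset ι} (hst : s ⊆ t)
    (f : ι → G) (comm : (t : Set ι).Pairwise (Commute on f)) (h : ∀ i ∈ t, i ∉ s → f i = 1) :
    s.noncommProd f (comm.mono (coe_subset.2 hst)) = t.noncommProd f comm := by
  classical
  calc s.noncommProd f _ = s.noncommProd f _ * (t \ s).noncommProd f (comm.mono (by simp)) := by
        rw [noncommProd_eq_pow_card _ _ _ 1 fun i hi => h i (mem_sdiff.1 hi).1 (mem_sdiff.1 hi).2,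
          one_pow, mul_one]
    _ = (s ∪ (t \ s)).noncommProd f (comm.mono (by simp [hst])) :=
        (noncommProd_union_of_disjoint disjoint_sdiff f _).symm
    _ = t.noncommProd f comm := noncommProd_congr (union_sdiff_of_subset hst) (fun _ _ => rfl) _

theorem Set.Finite.noncommProd_toFinset_eq {ι G : Type*} [Monoid G] {f : ι → G}
    (hf : (mulSupport f).Finite) (comm : Pairwise (Commute on f)) {s : Finset ι}
    (hs : mulSupport f ⊆ s) :
    hf.toFinset.noncommProd f (comm.set_pairwise _) = s.noncommProd f (comm.set_pairwise _) :=
  Finset.noncommProd_subset (by simpa using hs) f _ fun i _ hi => by simpa using hi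

section InternalDirectSum

variable {G ι A : Type*} [Group G] [Group A]

def finSuppPi (H : ι → Subgroup G) : Subgroup (ι → G) :=
  FinSuppFun ι G ⊓ Subgroup.pi Set.univ H

variable {H : ι → Subgroup G}

theorem mem_finSuppPi {f : ι → G} : f ∈ finSuppPi H ↔ (mulSupport f).Finite ∧ ∀ i, f i ∈ H i := by
  simp [finSuppPi, FinSuppFun, Subgroup.mem_inf, Subgroup.mem_pi]

theorem finite_mulSupport_finSuppPi (f : finSuppPi H) : (mulSupport (f : ι → G)).Finite :=
  (mem_finSuppPi.1 f.2).1

theorem apply_mem_finSuppPi (f : finSuppPi H) (i : ι) : (f : ι → G) i ∈ H i :=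
  (mem_finSuppPi.1 f.2).2 i

def finSuppPiMulEquiv (e : ∀ i, H i ≃* A) : finSuppPi H ≃* FinSuppFun ι A where
  toFun f := ⟨fun i => e i ⟨f.1 i, apply_mem_finSuppPi f i⟩,
    (finite_mulSupport_finSuppPi f).subset fun i hi h => hi (by simp [h])⟩
  invFun g := ⟨fun i => (e i).symm (g.1 i), mem_finSuppPi.2
    ⟨g.2.subset fun i hi h => hi (by simp [h]), fun i => ((e i).symm _).2⟩⟩
  left_inv f := by ext; simp
  right_inv g := by ext; simp
  map_mul' f g := by ext; simp [← map_mul]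

variable (hcomm : Pairwise fun i j => H i ≤ Subgroup.centralizer (H j))
include hcomm

theorem commute_of_mem_of_ne {i j : ι} (hij : i ≠ j) {x y : G} (hx : x ∈ H i) (hy : y ∈ H j) :
    Commute x y :=
  (Subgroup.mem_centralizer_iff.1 (hcomm hij hx) y hy).symm

theorem pairwise_commute_finSuppPi (f : finSuppPi H) : Pairwise (Commute on (f : ι → G)) :=
  fun _ _ hij => commute_of_mem_of_ne hcomm hij (apply_mem_finSuppPi f _) (apply_mem_finSuppPi f _)

noncomputable def finSuppPiProd : finSuppPi H →* G where
  toFun f := (finite_mulSupport_finSuppPi f).toFinset.noncommProd f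
    ((pairwise_commute_finSuppPi hcomm f).set_pairwise _)
  map_one' := by simp; rfl
  map_mul' f g := by
    classical
    have hf := finite_mulSupport_finSuppPi f
    have hg := finite_mulSupport_finSuppPi g
    let s := hf.toFinset ∪ hg.toFinset
    have hsf : mulSupport (f : ι → G) ⊆ s := by simp [s]
    have hsg : mulSupport (g : ι → G) ⊆ s := by simp [s]
    have hsfg : mulSupport ((f * g : finSuppPi H) : ι → G) ⊆ s :=
      (mulSupport_mul _ _).trans (Set.union_subset hsf hsg)
    rw [(finite_mulSupport_finSuppPi (f * g)).noncommProd_toFinset_eq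
        (pairwise_commute_finSuppPi hcomm _) hsfg,
      hf.noncommProd_toFinset_eq (pairwise_commute_finSuppPi hcomm _) hsf,
      hg.noncommProd_toFinset_eq (pairwise_commute_finSuppPi hcomm _) hsg,
      ← Finset.noncommProd_mul_distrib _ _ _ _ fun i _ j _ hij =>
        commute_of_mem_of_ne hcomm hij (apply_mem_finSuppPi g i) (apply_mem_finSuppPi f j)]
    rfl

theorem finSuppPiProd_eq_noncommProd (f : finSuppPi H) {s : Finset ι}
    (hs : mulSupport (f : ι → G) ⊆ s) :
    finSuppPiProd hcomm f = s.noncommProd f ((pairwise_commute_finSuppPi hcomm f).set_pairwise _) :=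
  Set.Finite.noncommProd_toFinset_eq _ (pairwise_commute_finSuppPi hcomm f) hs

theorem exists_finSuppPiProd_eq_of_mem_biSup {S : Set ι} {x : G} (hx : x ∈ ⨆ i ∈ S, H i) :
    ∃ f : finSuppPi H, mulSupport (f : ι → G) ⊆ S ∧ finSuppPiProd hcomm f = x := by
  classical
  rw [← iSup_subtype''] at hx
  refine Subgroup.iSup_induction (fun i : S => H i)
    (C := fun x => ∃ f : finSuppPi H, mulSupport (f : ι → G) ⊆ S ∧ finSuppPiProd hcomm f = x)
    hx (fun i x hx => ?_) ⟨1, by simp, map_one _⟩ fun x y hx hy => ?_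
  · have hsupp : mulSupport (Pi.mulSingle (i : ι) x) ⊆ {(i : ι)} := Pi.mulSupport_mulSingle_subset
    have hmem : Pi.mulSingle (i : ι) x ∈ finSuppPi H := by
      refine mem_finSuppPi.2 ⟨(Set.finite_singleton _).subset hsupp, fun j => ?_⟩
      rcases eq_or_ne j i with rfl | hji
      · simpa using hx
      · simp [hji]
    refine ⟨⟨_, hmem⟩, hsupp.trans (by simp), ?_⟩
    rw [finSuppPiProd_eq_noncommProd hcomm _ (s := {(i : ι)}) (by simpa using hsupp),
      Finset.noncommProd_singleton]
    simp
  · obtain ⟨f, hfS, rfl⟩ := hx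
    obtain ⟨g, hgS, rfl⟩ := hy
    exact ⟨f * g, (mulSupport_mul _ _).trans (Set.union_subset hfS hgS), map_mul _ _ _⟩

theorem finSuppPiProd_injective (hind : iSupIndep H) : Injective (finSuppPiProd hcomm) := by
  rw [injective_iff_map_eq_one]
  intro f hf
  have hfin := finite_mulSupport_finSuppPi f
  have key := Subgroup.eq_one_of_noncommProd_eq_one_of_iSupIndep hfin.toFinset (f : ι → G)
    ((pairwise_commute_finSuppPi hcomm f).set_pairwise _) H hind
    (fun i _ => apply_mem_finSuppPi f i) hf
  ext i
  by_contra h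
  exact h (key i (by simpa using h))

theorem range_finSuppPiProd : (finSuppPiProd hcomm).range = ⨆ i, H i := by
  refine le_antisymm ?_ fun x hx => ?_
  · rintro _ ⟨f, rfl⟩
    exact Subgroup.noncommProd_mem _ ((pairwise_commute_finSuppPi hcomm f).set_pairwise _)
      fun i _ => le_iSup H i (apply_mem_finSuppPi f i)
  · obtain ⟨f, -, rfl⟩ :=
      exists_finSuppPiProd_eq_of_mem_biSup hcomm (S := Set.univ) (by simpa using hx)
    exact ⟨f, rfl⟩

theorem disjoint_biSup_biSup (hind : iSupIndep H) {S T : Set ι} (hST : Disjoint S T) :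
    Disjoint (⨆ i ∈ S, H i) (⨆ i ∈ T, H i) := by
  rw [Subgroup.disjoint_def]
  intro x hS hT
  obtain ⟨f, hfS, rfl⟩ := exists_finSuppPiProd_eq_of_mem_biSup hcomm hS
  obtain ⟨g, hgT, hgf⟩ := exists_finSuppPiProd_eq_of_mem_biSup hcomm hT
  obtain rfl := finSuppPiProd_injective hcomm hind hgf
  have : g = 1 := Subtype.ext <| mulSupport_eq_empty_iff.1 <| Set.eq_empty_of_forall_notMem
    fun i hi => Set.disjoint_left.1 hST (hfS hi) (hgT hi)
  rw [this, map_one]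

theorem nonempty_iSup_mulEquiv_finSuppFun (hind : iSupIndep H)
    (hiso : ∀ i, Nonempty (H i ≃* A)) : Nonempty (↥(⨆ i, H i) ≃* FinSuppFun ι A) :=
  ⟨(MulEquiv.subgroupCongr (range_finSuppPiProd hcomm).symm).trans <|
    (MonoidHom.ofInjective (finSuppPiProd_injective hcomm hind)).symm.trans <|
      finSuppPiMulEquiv fun i => (hiso i).some⟩

end InternalDirectSum

section Blocks

variable {G I J K : Type*} [Group G] {H : I → Subgroup G}
  (hcomm : Pairwise fun i j => H i ≤ Subgroup.centralizer (H j)) {f : J × K → I}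
  (hf : Injective f)
include hcomm hf

theorem pairwise_iSup_blocks_le_centralizer :
    Pairwise fun j j' => (⨆ k, H (f (j, k))) ≤
      Subgroup.centralizer ((⨆ k, H (f (j', k)) : Subgroup G) : Set G) :=
  fun _ _ hjj' => iSup_le fun _ => Subgroup.le_centralizer_iff.2 <| iSup_le fun _ =>
    hcomm fun h => hjj' (congrArg Prod.fst (hf h)).symm

theorem iSupIndep_iSup_blocks (hind : iSupIndep H) : iSupIndep fun j => ⨆ k, H (f (j, k)) := by
  intro j
  refine (disjoint_biSup_biSup hcomm hind disjoint_compl_right).mono iSup_range.ge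
    (iSup₂_le fun j' hj' => iSup_le fun k => le_biSup H ?_)
  rintro ⟨k', hk'⟩
  exact hj' (congrArg Prod.fst (hf hk')).symm

end Blocks

theorem isWreathLikeProduct_subgroupOf {W C D J : Type*} [Group W] [Group C] [Group D]
    [MulAction D J] {V : Subgroup W} {R : J → Subgroup W} {ε' : V →* D} (hRV : ∀ j, R j ≤ V)
    (hsurj : Surjective ε') (hiso : ∀ j, Nonempty (R j ≃* C))
    (hcomm : Pairwise fun i j => R i ≤ Subgroup.centralizer (R j)) (hind : iSupIndep R)
    (hbase : ⨆ j, R j = ε'.ker.map V.subtype)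
    (hconj : ∀ (v : V) (j : J), (R j).map (MulAut.conj (v : W)).toMonoidHom = R (ε' v • j)) :
    IsWreathLikeProduct V C D J (fun j => (R j).subgroupOf V) ε' where
  surjective := hsurj
  isoA j := ⟨(Subgroup.subgroupOfEquivOfLe (hRV j)).trans (hiso j).some⟩
  commute i j hij x hx y hy := Subtype.ext (commute_of_mem_of_ne hcomm hij hx hy)
  indep j := by
    have hle : (⨆ (j') (_ : j' ≠ j), (R j').subgroupOf V) ≤
        (⨆ (j') (_ : j' ≠ j), R j').subgroupOf V :=
      iSup₂_le fun j' hj' => Subgroup.comap_mono (le_biSup R hj')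
    rw [Subgroup.disjoint_def]
    exact fun hx hx' => Subtype.ext (Subgroup.disjoint_def.1 (hind j) hx (hle hx'))
  base_eq := Subgroup.map_injective V.subtype_injective <| by
    simp only [Subgroup.map_iSup, Subgroup.map_subgroupOf_eq_of_le (hRV _), hbase]
  conj_eq v j := Subgroup.map_injective V.subtype_injective <| by
    have hcomp : V.subtype.comp (MulAut.conj v).toMonoidHom =
        (MulAut.conj (v : W)).toMonoidHom.comp V.subtype := by
      ext; simp
    rw [Subgroup.map_map, hcomp, ← Subgroup.map_map, Subgroup.map_subgroupOf_eq_of_le (hRV _),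
      Subgroup.map_subgroupOf_eq_of_le (hRV _), hconj]

theorem IsWreathLikeProduct.exists_comap_of_bijective {W A B I J K : Type*} [Group W] [Group A]
    [Group B] [MulAction B I] {𝒜 : I → Subgroup W} {ε : W →* B}
    (hW : IsWreathLikeProduct W A B I 𝒜 ε) (D : Subgroup B) [MulAction D J] {f : J × K → I}
    (hf : Bijective f) (hfD : ∀ (d : D) (j : J) (k : K), f (d • j, k) = (d : B) • f (j, k)) :
    ∃ (ℬ : J → Subgroup (Subgroup.comap ε D)) (ε' : Subgroup.comap ε D →* D),
      IsWreathLikeProduct (Subgroup.comap ε D) (FinSuppFun K A) D J ℬ ε' := by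
  have hcomm : Pairwise fun i j => 𝒜 i ≤ Subgroup.centralizer (𝒜 j) := fun i j hij x hx =>
    Subgroup.mem_centralizer_iff.2 fun y hy => (hW.commute i j hij x hx y hy).symm
  have hker : ε.ker ≤ Subgroup.comap ε D := fun w hw => by simp [MonoidHom.mem_ker.1 hw]
  have hker' : (ε.subgroupComap D).ker = ε.ker.subgroupOf (Subgroup.comap ε D) :=
    Subgroup.ext fun _ => Subtype.ext_iff
  refine ⟨_, ε.subgroupComap D, isWreathLikeProduct_subgroupOf
    (R := fun j => ⨆ k, 𝒜 (f (j, k)))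
    (fun j => iSup_le fun k => (hW.base_eq ▸ le_iSup 𝒜 _).trans hker)
    (ε.subgroupComap_surjective_of_surjective D hW.surjective) (fun j => ?_)
    (pairwise_iSup_blocks_le_centralizer hcomm hf.1)
    (iSupIndep_iSup_blocks hcomm hf.1 hW.indep) ?_ fun v j => ?_⟩
  · have hinj : Injective fun k => f (j, k) := hf.1.comp (Prod.mk_right_injective j)
    exact nonempty_iSup_mulEquiv_finSuppFun (fun k k' h => hcomm (hinj.ne h))
      (iSupIndep.comp hW.indep hinj) fun k => hW.isoA _
  · rw [← iSup_prod (f := fun p => 𝒜 (f p)), hf.2.iSup_comp, hW.base_eq, hker',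
      Subgroup.map_subgroupOf_eq_of_le hker]
  · simp only [Subgroup.map_iSup, hW.conj_eq, hfD]
    rfl

theorem MulAction.bijective_smul_out {G X : Type*} [Group G] [MulAction G X]
    (hfree : ∀ (g : G) (x : X), g • x = x → g = 1) :
    Bijective fun p : G × orbitRel.Quotient G X => p.1 • p.2.out := by
  refine ⟨?_, fun x => ?_⟩
  · rintro ⟨g, o⟩ ⟨g', o'⟩ (h : g • o.out = g' • o'.out)
    obtain rfl : o = o' := by simpa using congrArg (Quotient.mk (orbitRel G X)) h
    have : (g'⁻¹ * g) • o.out = o.out := by rw [mul_smul, h, inv_smul_smul]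
    simp [inv_mul_eq_one.1 (hfree _ _ this)]
  · obtain ⟨g, hg⟩ := orbitRel_apply.1 ((orbitRel G X).symm (Quotient.mk_out' x))
    exact ⟨(g, _), hg⟩

theorem wreathLike_preimage_of_free_subgroup_general
    {W A B I : Type*} [Group W] [Group A] [Group B] [MulAction B I]
    (𝒜 : I → Subgroup W) (ε : W →* B)
    (hW : IsWreathLikeProduct W A B I 𝒜 ε)
    (D : Subgroup B)
    (hfree : ∀ (d : D) (i : I), d • i = i → d = 1) :
    ∃ (ℬ : D → Subgroup (Subgroup.comap ε D)) (ε' : Subgroup.comap ε D →* D),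
      IsWreathLikeProduct (Subgroup.comap ε D)
        (FinSuppFun (MulAction.orbitRel.Quotient D I) A) D D ℬ ε' :=
  hW.exists_comap_of_bijective D (MulAction.bijective_smul_out hfree) fun d j _ => mul_smul d j _

/-- Let `B` act transitively on `I`, let `W ∈ WR(A, B ↷ I)` with canonical
homomorphism `ε`, let `D ≤ B` be a subgroup whose induced action on `I` is free, and let
`V = ε⁻¹(D)`. Then `V` is a regular wreath-like product of `C` and `D`, where `C` is the
direct sum of copies of `A` indexed by the set `O` of `D`-orbits in `I`. -/
theorem wreathLike_preimage_of_free_subgroup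
    {W A B I : Type*} [Group W] [Group A] [Group B] [MulAction B I]
    (htrans : MulAction.IsPretransitive B I)
    (𝒜 : I → Subgroup W) (ε : W →* B)
    (hW : IsWreathLikeProduct W A B I 𝒜 ε)
    (D : Subgroup B)
    (hfree : ∀ (d : D) (i : I), d • i = i → d = 1) :
    ∃ (ℬ : D → Subgroup (Subgroup.comap ε D)) (ε' : Subgroup.comap ε D →* D),
      IsWreathLikeProduct (Subgroup.comap ε D)
        (FinSuppFun (MulAction.orbitRel.Quotient D I) A) D D ℬ ε' :=
  wreathLike_preimage_of_free_subgroup_general 𝒜 ε hW D hfree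
end

section
/- Let A and B be any groups and let W be a regular wreath-like product of A and B with base ⊕_{b∈B} A_b; identify A with the subgroup A_1 of the base. Then for any normal subgroup N of A, the quotient W/⟪N⟫ is a regular wreath-like product of A/N and B, where ⟪N⟫ denotes the normal closure of N in W. -/
/-- Let `W` be a regular wreath-like product of `A` and `B`, identify `A`
with the copy `𝒜 1` inside the base, and let `N` be a normal subgroup of `A = 𝒜 1`.
Then `W/⟪N⟫` is a regular wreath-like product of `A/N` and `B`, where `⟪N⟫` is the normal
closure of `N` in `W`. -/
theorem quotient_of_regular_wreathLike_by_normalClosure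
    {W A B : Type*} [Group W] [Group A] [Group B]
    (𝒜 : B → Subgroup W) (ε : W →* B)
    (hW : IsWreathLikeProduct W A B B 𝒜 ε)
    (N : Subgroup W) (hN : N ≤ 𝒜 (1 : B))
    [(N.subgroupOf (𝒜 (1 : B))).Normal] :
    ∃ (ℬ : B → Subgroup (W ⧸ Subgroup.normalClosure (N : Set W)))
      (ε' : (W ⧸ Subgroup.normalClosure (N : Set W)) →* B),
      IsWreathLikeProduct (W ⧸ Subgroup.normalClosure (N : Set W))
        (𝒜 (1 : B) ⧸ N.subgroupOf (𝒜 (1 : B))) B B ℬ ε' := by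
  classical
  obtain ⟨hsurj, _hiso, hcomm, hindep, hbase, hconj⟩ := hW
  set M := Subgroup.normalClosure (N : Set W) with hMdef
  let σ : B → W := Function.surjInv hsurj
  have hσ : ∀ b, ε (σ b) = b := fun b => Function.surjInv_eq hsurj b
  have hA1ker : 𝒜 (1 : B) ≤ ε.ker := hbase ▸ le_iSup 𝒜 (1 : B)
  -- conjugation by elements of the base preserves N
  have L1 : ∀ k ∈ ε.ker, ∀ n ∈ N, k * n * k⁻¹ ∈ N := by
    intro k hk
    rw [← hbase] at hk
    refine Subgroup.iSup_induction (C := fun k => ∀ n ∈ N, k * n * k⁻¹ ∈ N) 𝒜 hk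
      (fun j a ha n hn => ?_) (fun n hn => by simpa using hn)
      (fun x y hx hy n hn => ?_)
    · by_cases hj : j = (1 : B)
      · subst hj
        have := ‹(N.subgroupOf (𝒜 (1 : B))).Normal›.conj_mem ⟨n, hN hn⟩
          (by simpa [Subgroup.mem_subgroupOf] using hn) ⟨a, ha⟩
        simpa [Subgroup.mem_subgroupOf] using this
      · have hc : Commute a n := hcomm j 1 hj a ha n (hN hn)
        have h : a * n * a⁻¹ = n := by
          rw [hc.eq]; group
        rw [h]; exact hn
    · have h : x * y * n * (x * y)⁻¹ = x * (y * n * y⁻¹) * x⁻¹ := by group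
      rw [h]; exact hx _ (hy n hn)
  have L1' : ∀ k ∈ ε.ker, Subgroup.map (MulAut.conj k).toMonoidHom N = N := by
    intro k hk
    apply le_antisymm
    · rintro _ ⟨n, hn, rfl⟩
      simpa [MulAut.conj_apply] using L1 k hk n hn
    · intro n hn
      refine ⟨k⁻¹ * n * k, by simpa using L1 k⁻¹ (inv_mem hk) n hn, ?_⟩
      simp only [MulEquiv.coe_toMonoidHom, MulAut.conj_apply]
      group
  -- the conjugates of N
  let Nb : B → Subgroup W := fun b => Subgroup.map (MulAut.conj (σ b)).toMonoidHom N
  have hNb : ∀ b, Nb b = Subgroup.map (MulAut.conj (σ b)).toMonoidHom N := fun _ => rfl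
  have hconjcomp : ∀ (u v : W) (H : Subgroup W),
      Subgroup.map (MulAut.conj (u * v)).toMonoidHom H
        = Subgroup.map (MulAut.conj u).toMonoidHom
            (Subgroup.map (MulAut.conj v).toMonoidHom H) := by
    intro u v H
    rw [Subgroup.map_map]
    congr 1
    ext x
    simp only [MulEquiv.coe_toMonoidHom, MonoidHom.comp_apply, MulAut.conj_apply]
    group
  have L2 : ∀ w : W, Subgroup.map (MulAut.conj w).toMonoidHom N = Nb (ε w) := by
    intro w
    have hk : (σ (ε w))⁻¹ * w ∈ ε.ker := by
      simp [MonoidHom.mem_ker, hσ]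
    calc Subgroup.map (MulAut.conj w).toMonoidHom N
        = Subgroup.map (MulAut.conj (σ (ε w) * ((σ (ε w))⁻¹ * w))).toMonoidHom N := by
          rw [mul_inv_cancel_left]
      _ = Subgroup.map (MulAut.conj (σ (ε w))).toMonoidHom
            (Subgroup.map (MulAut.conj ((σ (ε w))⁻¹ * w)).toMonoidHom N) := hconjcomp _ _ _
      _ = Nb (ε w) := by rw [L1' _ hk, hNb]
  have hNbA : ∀ b, Nb b ≤ 𝒜 b := by
    intro b
    have h : Subgroup.map (MulAut.conj (σ b)).toMonoidHom N
        ≤ Subgroup.map (MulAut.conj (σ b)).toMonoidHom (𝒜 (1 : B)) := Subgroup.map_mono hN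
    rw [hconj, hσ, smul_eq_mul, mul_one] at h
    rw [hNb]; exact h
  have hconjNb : ∀ (w : W) (b : B),
      Subgroup.map (MulAut.conj w).toMonoidHom (Nb b) = Nb (ε w * b) := by
    intro w b
    rw [hNb, ← hconjcomp, L2, map_mul, hσ]
  have hNb1 : Nb (1 : B) = N := by
    rw [hNb]
    exact L1' (σ 1) (by simp [MonoidHom.mem_ker, hσ])
  have hMsup : M = ⨆ b, Nb b := by
    apply le_antisymm
    · have hnormal : (⨆ b, Nb b).Normal := by
        constructor
        intro x hx w
        have h1 : w * x * w⁻¹ ∈ Subgroup.map (MulAut.conj w).toMonoidHom (⨆ b, Nb b) :=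
          ⟨x, hx, rfl⟩
        rw [Subgroup.map_iSup] at h1
        simp_rw [hconjNb] at h1
        exact (iSup_le fun b => le_iSup Nb (ε w * b)) h1
      exact Subgroup.normalClosure_le_normal (N := ⨆ b, Nb b)
        (by simpa using (hNb1 ▸ le_iSup Nb (1 : B) : N ≤ ⨆ b, Nb b))
    · refine iSup_le fun b => ?_
      rw [hNb]
      rintro _ ⟨n, hn, rfl⟩
      have hnM : n ∈ M := Subgroup.subset_normalClosure hn
      simpa [MulAut.conj_apply] using
        (Subgroup.normalClosure_normal (s := (N : Set W))).conj_mem n hnM (σ b)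
  -- commuting of the conjugates
  have hcommNb : ∀ (i : B) (x : W), x ∈ 𝒜 i →
      ∀ y ∈ ⨆ (j) (_ : j ≠ i), Nb j, Commute x y := by
    intro i x hx y hy
    rw [iSup_subtype'] at hy
    refine Subgroup.iSup_induction (C := fun y => Commute x y) _ hy
      (fun j z hz => ?_) (Commute.one_right x) (fun a b ha hb => ha.mul_right hb)
    exact hcomm i j.1 (Ne.symm j.2) x hx z (hNbA j.1 hz)
  have hNbsub : ∀ i : B, (⨆ (j) (_ : j ≠ i), Nb j) ≤ ⨆ (j) (_ : j ≠ i), 𝒜 j :=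
    fun i => iSup_mono fun j => iSup_mono fun _ => hNbA j
  -- decomposition of elements of the closure
  have hdecomp : ∀ x ∈ ⨆ b, Nb b, ∀ i : B,
      ∃ n ∈ Nb i, ∃ m ∈ ⨆ (j) (_ : j ≠ i), Nb j, x = n * m := by
    intro x hx i
    refine Subgroup.iSup_induction
      (C := fun x => ∃ n ∈ Nb i, ∃ m ∈ ⨆ (j) (_ : j ≠ i), Nb j, x = n * m) Nb hx
      (fun b z hz => ?_) ⟨1, one_mem _, 1, one_mem _, by simp⟩ ?_
    · by_cases hb : b = i
      · exact ⟨z, hb ▸ hz, 1, one_mem _, by simp⟩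
      · exact ⟨1, one_mem _, z,
          Subgroup.mem_iSup_of_mem b (Subgroup.mem_iSup_of_mem hb hz), by simp⟩
    · rintro a c ⟨n, hn, m, hm, rfl⟩ ⟨n', hn', m', hm', rfl⟩
      have hcm : Commute n' m := hcommNb i n' (hNbA i hn') m hm
      refine ⟨n * n', mul_mem hn hn', m * m', mul_mem hm hm', ?_⟩
      calc n * m * (n' * m') = n * (m * n') * m' := by group
        _ = n * (n' * m) * m' := by rw [← hcm.eq]
        _ = n * n' * (m * m') := by group
  -- intersection of the closure with a coordinate
  have hMA : ∀ i : B, ∀ x ∈ 𝒜 i, x ∈ M → x ∈ Nb i := by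
    intro i x hxA hxM
    rw [hMsup] at hxM
    obtain ⟨n, hn, m, hm, rfl⟩ := hdecomp _ hxM i
    have hmA : m ∈ ⨆ (j) (_ : j ≠ i), 𝒜 j := hNbsub i hm
    have hm1 : m ∈ 𝒜 i := by
      have h : m = n⁻¹ * (n * m) := by group
      rw [h]; exact mul_mem (inv_mem (hNbA i hn)) hxA
    have hm2 : m = 1 := Subgroup.disjoint_def.mp (hindep i) hm1 hmA
    rw [hm2, mul_one]; exact hn
  have hMker : M ≤ ε.ker :=
    Subgroup.normalClosure_le_normal (by exact_mod_cast (hN.trans hA1ker : N ≤ ε.ker))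
  -- the quotient data
  let π := QuotientGroup.mk' M
  have hπ : Function.Surjective π := QuotientGroup.mk'_surjective M
  let ε' : (W ⧸ M) →* B := QuotientGroup.lift M ε hMker
  have hε'π : ∀ w : W, ε' (π w) = ε w := fun w => rfl
  have hAiπ : ∀ (i : B), Subgroup.map (MulAut.conj (σ i)).toMonoidHom (𝒜 (1 : B)) = 𝒜 i := by
    intro i
    rw [hconj, hσ, smul_eq_mul, mul_one]
  refine ⟨fun b => Subgroup.map π (𝒜 b), ε', ?_, ?_, ?_, ?_, ?_, ?_⟩
  · -- surjective
    intro b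
    obtain ⟨w, hw⟩ := hsurj b
    exact ⟨π w, (hε'π w).trans hw⟩
  · -- isoA
    intro i
    set c : W →* W := (MulAut.conj (σ i)).toMonoidHom with hc
    let f : (𝒜 (1 : B)) →* (W ⧸ M) := (π.comp c).comp (𝒜 (1 : B)).subtype
    have hrange : f.range = Subgroup.map π (𝒜 i) := by
      rw [show f = (π.comp c).comp (𝒜 (1 : B)).subtype from rfl, MonoidHom.range_comp,
        Subgroup.range_subtype, ← Subgroup.map_map, hAiπ i]
    have hker : f.ker = N.subgroupOf (𝒜 (1 : B)) := by
      ext x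
      simp only [MonoidHom.mem_ker, Subgroup.mem_subgroupOf]
      constructor
      · intro hx
        have hcxM : c ↑x ∈ M := (QuotientGroup.eq_one_iff _).mp hx
        have hcxA : c ↑x ∈ 𝒜 i := by
          have h : c ↑x ∈ Subgroup.map c (𝒜 (1 : B)) := ⟨↑x, x.2, rfl⟩
          rwa [hAiπ i] at h
        have hNbmem : c ↑x ∈ Nb i := hMA i _ hcxA hcxM
        rw [hNb] at hNbmem
        obtain ⟨n, hn, hn2⟩ := hNbmem
        have heq : n = ↑x := (MulAut.conj (σ i)).injective hn2
        rwa [← heq]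
      · intro hx
        have hmem : c ↑x ∈ Nb i := by rw [hNb]; exact ⟨↑x, hx, rfl⟩
        have hcM : c ↑x ∈ M := by rw [hMsup]; exact Subgroup.mem_iSup_of_mem i hmem
        exact (QuotientGroup.eq_one_iff _).mpr hcM
    exact ⟨(((QuotientGroup.quotientMulEquivOfEq hker.symm).trans
      (QuotientGroup.quotientKerEquivRange f)).trans
      (MulEquiv.subgroupCongr hrange)).symm⟩
  · -- commute
    rintro i j hij x ⟨a, ha, rfl⟩ y ⟨b, hb, rfl⟩
    exact (hcomm i j hij a ha b hb).map π
  · -- indep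
    intro i
    rw [Subgroup.disjoint_def]
    rintro x ⟨a, ha, rfl⟩ hx2
    have hsupmap : (⨆ (j) (_ : j ≠ i), Subgroup.map π (𝒜 j))
        = Subgroup.map π (⨆ (j) (_ : j ≠ i), 𝒜 j) := by
      simp_rw [Subgroup.map_iSup]
    rw [hsupmap] at hx2
    obtain ⟨d, hd, hdx⟩ := hx2
    obtain ⟨z, hzM, hza⟩ := (QuotientGroup.mk'_eq_mk' M).mp hdx
    rw [hMsup] at hzM
    obtain ⟨n, hn, m', hm', rfl⟩ := hdecomp _ hzM i
    have hcm : Commute n m' := hcommNb i n (hNbA i hn) m' hm'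
    have key : a * n⁻¹ = d * m' := by
      calc a * n⁻¹ = d * (n * m') * n⁻¹ := by rw [hza]
        _ = d * (m' * n) * n⁻¹ := by rw [hcm.eq]
        _ = d * m' := by group
    have h𝒜 : a * n⁻¹ ∈ 𝒜 i := mul_mem ha (inv_mem (hNbA i hn))
    have h2 : a * n⁻¹ ∈ ⨆ (j) (_ : j ≠ i), 𝒜 j := by
      rw [key]; exact mul_mem hd (hNbsub i hm')
    have h3 : a * n⁻¹ = 1 := Subgroup.disjoint_def.mp (hindep i) h𝒜 h2
    have haM : a ∈ M := by
      rw [mul_inv_eq_one.mp h3, hMsup]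
      exact Subgroup.mem_iSup_of_mem i hn
    exact (QuotientGroup.eq_one_iff a).mpr haM
  · -- base_eq
    rw [← Subgroup.map_iSup, hbase]
    ext x
    constructor
    · rintro ⟨w, hw, rfl⟩
      have : ε' (π w) = 1 := by rw [hε'π]; exact hw
      exact this
    · intro hx
      obtain ⟨w, rfl⟩ := hπ x
      have hx' : ε' (π w) = 1 := hx
      exact ⟨w, show ε w = 1 from hε'π w ▸ hx', rfl⟩
  · -- conj_eq
    intro w' i
    obtain ⟨w, rfl⟩ := hπ w'
    have hcompeq : (MulAut.conj (π w)).toMonoidHom.comp (π : W →* W ⧸ M)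
        = (π : W →* W ⧸ M).comp (MulAut.conj w).toMonoidHom := by
      ext x
      simp [MulAut.conj_apply]
    rw [Subgroup.map_map, hcompeq, ← Subgroup.map_map, hconj, hε'π w]
end

section
/- Let B be an ICC group acting on a set I such that the orbit B·i is infinite for every i ∈ I, and let A be any group. Then every wreath-like product G of A and B corresponding to the action B ↷ I is ICC. -/
/-- A group is ICC (infinite conjugacy classes) if the conjugacy class of every
nontrivial element is infinite. -/
def IsICC (G : Type*) [Group G] : Prop :=
  ∀ g : G, g ≠ 1 → {x : G | ∃ h : G, h * g * h⁻¹ = x}.Infinite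

private lemma mem_sup_of_commute' {G : Type*} [Group G] {H K : Subgroup G}
    (hc : ∀ x ∈ H, ∀ y ∈ K, Commute x y) {g : G} (hg : g ∈ H ⊔ K) :
    ∃ a ∈ H, ∃ b ∈ K, a * b = g := by
  let S : Subgroup G :=
    { carrier := {g | ∃ a ∈ H, ∃ b ∈ K, a * b = g}
      one_mem' := ⟨1, one_mem _, 1, one_mem _, one_mul 1⟩
      mul_mem' := by
        rintro x y ⟨a, ha, b, hb, rfl⟩ ⟨a', ha', b', hb', rfl⟩
        refine ⟨a * a', mul_mem ha ha', b * b', mul_mem hb hb', ?_⟩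
        have hcomm : a' * b = b * a' := (hc a' ha' b hb).eq
        calc a * a' * (b * b') = a * (a' * b) * b' := by
              rw [mul_assoc a a', mul_assoc, mul_assoc]
        _ = a * (b * a') * b' := by rw [hcomm]
        _ = a * b * (a' * b') := by rw [mul_assoc a b, mul_assoc, mul_assoc]
      inv_mem' := by
        rintro x ⟨a, ha, b, hb, rfl⟩
        refine ⟨a⁻¹, inv_mem ha, b⁻¹, inv_mem hb, ?_⟩
        rw [mul_inv_rev, ((hc a ha b hb).inv_inv).eq] }
  have h1 : H ≤ S := fun a ha => ⟨a, ha, 1, one_mem _, mul_one a⟩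
  have h2 : K ≤ S := fun b hb => ⟨1, one_mem _, b, hb, one_mul b⟩
  exact sup_le h1 h2 hg

/-- If `B` is an ICC group acting on a set `I` with all orbits infinite,
then every wreath-like product `G ∈ WR(A, B ↷ I)` is ICC. -/
theorem isICC_of_wreathLike
    {G A B I : Type*} [Group G] [Group A] [Group B] [MulAction B I]
    (hB : IsICC B)
    (horb : ∀ i : I, (MulAction.orbit B i).Infinite)
    (𝒜 : I → Subgroup G) (ε : G →* B)
    (hG : IsWreathLikeProduct G A B I 𝒜 ε) :
    IsICC G := by
  classical
  intro g hg1
  set C : Set G := {x : G | ∃ h : G, h * g * h⁻¹ = x} with hCdef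
  by_contra hfin
  rw [Set.not_infinite] at hfin
  by_cases hker : ε g = 1
  · -- g ∈ ker ε
    have hgN : g ∈ ⨆ i : I, 𝒜 i := by
      rw [hG.base_eq]; exact hker
    -- conjugation moves the subgroups
    have hconj : ∀ (h : G) (j : I), ∀ x ∈ 𝒜 j, h * x * h⁻¹ ∈ 𝒜 (ε h • j) := by
      intro h j x hx
      rw [← hG.conj_eq h j]
      exact Subgroup.mem_map.mpr ⟨x, hx, by simp⟩
    set K : I → Subgroup G := fun i => ⨆ (j : I) (_ : j ≠ i), 𝒜 j with hKdef
    have hKconj : ∀ (w : G) (i : I), ∀ x ∈ K i, w * x * w⁻¹ ∈ K (ε w • i) := by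
      intro w i x hx
      have hle : K i ≤ Subgroup.comap (MulAut.conj w).toMonoidHom (K (ε w • i)) := by
        refine iSup₂_le fun j hj y hy => ?_
        rw [Subgroup.mem_comap]
        have h1 := hconj w j y hy
        have h2 : 𝒜 (ε w • j) ≤ K (ε w • i) :=
          le_iSup₂ (f := fun j (_ : j ≠ ε w • i) => 𝒜 j) (ε w • j)
            (fun e => hj (MulAction.injective (ε w) e))
        simpa using h2 h1
      have := hle hx
      rw [Subgroup.mem_comap] at this
      simpa using this
    -- finite support
    have hSmem : ∃ S : Finset I, g ∈ ⨆ j ∈ S, 𝒜 j := by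
      have hdir : Directed (· ≤ ·) (fun S : Finset I => ⨆ j ∈ S, 𝒜 j) := by
        intro S T
        exact ⟨S ∪ T, biSup_mono (fun i hi => Finset.mem_union_left _ hi),
          biSup_mono (fun i hi => Finset.mem_union_right _ hi)⟩
      have heq : (⨆ i, 𝒜 i) = ⨆ S : Finset I, ⨆ j ∈ S, 𝒜 j := by
        apply le_antisymm
        · exact iSup_le fun i => le_iSup_of_le {i}
            (le_iSup₂ (f := fun j (_ : j ∈ ({i} : Finset I)) => 𝒜 j) i (Finset.mem_singleton_self i))
        · exact iSup_le fun S => iSup₂_le fun i _ => le_iSup 𝒜 i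
      rw [heq] at hgN
      exact (Subgroup.mem_iSup_of_directed hdir).mp hgN
    have hPex : ∃ n, ∃ S : Finset I, S.card = n ∧ g ∈ ⨆ j ∈ S, 𝒜 j := by
      obtain ⟨S, hS⟩ := hSmem; exact ⟨S.card, S, rfl, hS⟩
    obtain ⟨S₀, hScard, hSg⟩ := Nat.find_spec hPex
    have hSne : S₀.Nonempty := by
      rcases Finset.eq_empty_or_nonempty S₀ with h | h
      · exfalso; subst h; simp only [Finset.notMem_empty, iSup_false, iSup_bot] at hSg
        exact hg1 (Subgroup.mem_bot.mp hSg)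
      · exact h
    obtain ⟨i₀, hi₀⟩ := hSne
    have hgK : g ∉ K i₀ := by
      intro hgKi
      have hR : ∀ x ∈ 𝒜 i₀, ∀ y ∈ (⨆ j ∈ S₀.erase i₀, 𝒜 j), Commute x y := by
        intro x hx y hy
        have hle : (⨆ j ∈ S₀.erase i₀, 𝒜 j) ≤ Subgroup.centralizer {x} := by
          refine iSup₂_le fun j hj z hz => ?_
          rw [Subgroup.mem_centralizer_iff]
          intro a ha
          rw [Set.mem_singleton_iff] at ha
          rw [ha]
          exact ((hG.commute j i₀ (Finset.ne_of_mem_erase hj) z hz x hx).symm).eq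
        exact Subgroup.mem_centralizer_iff.mp (hle hy) x (Set.mem_singleton x)
      have hsup : g ∈ 𝒜 i₀ ⊔ ⨆ j ∈ S₀.erase i₀, 𝒜 j := by
        have heq : (⨆ j ∈ S₀, 𝒜 j) = 𝒜 i₀ ⊔ ⨆ j ∈ S₀.erase i₀, 𝒜 j := by
          conv_lhs => rw [← Finset.insert_erase hi₀]
          rw [Finset.iSup_insert]
        rwa [heq] at hSg
      obtain ⟨a, ha, r, hr, hag⟩ := mem_sup_of_commute' hR hsup
      have hrK : r ∈ K i₀ :=
        (iSup₂_le fun j hj => le_iSup₂ (f := fun j (_ : j ≠ i₀) => 𝒜 j) j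
          (Finset.ne_of_mem_erase hj)) hr
      have haK : a ∈ K i₀ := by
        have hae : a = g * r⁻¹ := by rw [← hag]; group
        rw [hae]; exact mul_mem hgKi (inv_mem hrK)
      have ha1 : a = 1 :=
        Subgroup.mem_bot.mp ((hG.indep i₀).le_bot (Subgroup.mem_inf.mpr ⟨ha, haK⟩))
      rw [ha1, one_mul] at hag
      have hlt : (S₀.erase i₀).card < Nat.find hPex := hScard ▸ Finset.card_erase_lt_of_mem hi₀
      exact Nat.find_min hPex hlt ⟨S₀.erase i₀, rfl, hag ▸ hr⟩
    -- produce infinitely many conjugates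
    haveI : Infinite (MulAction.orbit B i₀) := (horb i₀).to_subtype
    haveI : Finite C := hfin.to_subtype
    have key : ∀ p : MulAction.orbit B i₀, ∃ x : C, (x : G) ∉ K (p : I) := by
      intro p
      obtain ⟨b, hb⟩ := MulAction.mem_orbit_iff.mp p.2
      obtain ⟨w, hw⟩ := hG.surjective b
      refine ⟨⟨w * g * w⁻¹, w, rfl⟩, fun hx => ?_⟩
      have h1 := hKconj w⁻¹ (p : I) _ hx
      have h2 : w⁻¹ * (w * g * w⁻¹) * w⁻¹⁻¹ = g := by group
      have h3 : ε w⁻¹ • (p : I) = i₀ := by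
        rw [map_inv, hw, ← hb, inv_smul_smul]
      rw [h2, h3] at h1
      exact hgK h1
    choose f hf using key
    obtain ⟨x0, hx0⟩ := Finite.exists_infinite_fiber f
    obtain ⟨h, hh⟩ := x0.2
    set S' : Finset I := S₀.image (fun j => ε h • j) with hS'
    have hx0mem : (x0 : G) ∈ ⨆ j ∈ S', 𝒜 j := by
      have hle : (⨆ j ∈ S₀, 𝒜 j) ≤
          Subgroup.comap (MulAut.conj h).toMonoidHom (⨆ j ∈ S', 𝒜 j) := by
        refine iSup₂_le fun j hj x hx => ?_
        rw [Subgroup.mem_comap]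
        have h1 := hconj h j x hx
        have h2 : 𝒜 (ε h • j) ≤ ⨆ j ∈ S', 𝒜 j :=
          le_iSup₂ (f := fun j (_ : j ∈ S') => 𝒜 j) (ε h • j)
            (Finset.mem_image_of_mem _ hj)
        simpa using h2 h1
      have h4 := hle hSg
      rw [Subgroup.mem_comap] at h4
      have h5 : h * g * h⁻¹ ∈ ⨆ j ∈ S', 𝒜 j := by simpa using h4
      rwa [hh] at h5
    have hinj : Function.Injective
        (fun q : f ⁻¹' {x0} => ((q : MulAction.orbit B i₀) : I)) := by
      intro q q' hqq
      exact Subtype.ext (Subtype.ext hqq)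
    have hrange : Set.range (fun q : f ⁻¹' {x0} => ((q : MulAction.orbit B i₀) : I)) ⊆ ↑S' := by
      rintro _ ⟨q, rfl⟩
      by_contra hp
      have hp' : ((q : MulAction.orbit B i₀) : I) ∉ S' := fun hm => hp (Finset.mem_coe.mpr hm)
      have hxK : (x0 : G) ∈ K ((q : MulAction.orbit B i₀) : I) :=
        (iSup₂_le fun j hj => le_iSup₂ (f := fun j (_ : j ≠ ((q : MulAction.orbit B i₀) : I)) => 𝒜 j) j
          (fun e => hp' (e ▸ hj))) hx0mem
      have hq : f (q : MulAction.orbit B i₀) = x0 := q.2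
      exact (hq ▸ hf (q : MulAction.orbit B i₀)) hxK
    exact Set.infinite_range_of_injective hinj (S'.finite_toSet.subset hrange)
  · -- ε g ≠ 1
    have hBinf := hB (ε g) hker
    have hsub : {y : B | ∃ b : B, b * ε g * b⁻¹ = y} ⊆ ε '' C := by
      rintro y ⟨b, rfl⟩
      obtain ⟨w, rfl⟩ := hG.surjective b
      exact ⟨w * g * w⁻¹, ⟨w, rfl⟩, by simp [map_mul, map_inv]⟩
    exact (hBinf.mono hsub) (hfin.image ε)
end

section
/- Let W be a regular wreath-like product of groups A and B with canonical homomorphism ε: W → B, and identify A with the subgroup A_1 of the base. Let N be a normal subgroup of A. Then: (i) for every b ∈ B, the subgroup uNu⁻¹ of W is independent of the choice of the element u ∈ W with ε(u) = b (call this subgroup N_b); and (ii) the normal closure ⟪N⟫ of N in W is the internal direct sum of the family (N_b)_{b∈B}, i.e., the N_b pairwise commute elementwise, form an independent family of subgroups, and generate ⟪N⟫. -/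
namespace Subgroup

variable {G : Type*} [Group G]

theorem map_conj_map_conj (g h : G) (H : Subgroup G) :
    (H.map (MulAut.conj h).toMonoidHom).map (MulAut.conj g).toMonoidHom
      = H.map (MulAut.conj (g * h)).toMonoidHom := by
  rw [map_map, map_mul]
  rfl

theorem le_normalizer_of_forall_conj_mem {H K : Subgroup G}
    (hK : ∀ a ∈ K, ∀ n ∈ H, a * n * a⁻¹ ∈ H) : K ≤ normalizer (H : Set G) := by
  intro a ha
  refine mem_normalizer_iff.mpr fun n => ⟨hK a ha n, fun hn => ?_⟩
  simpa [mul_assoc] using hK a⁻¹ (inv_mem ha) _ hn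

theorem map_conj_eq_self_of_mem_normalizer {H : Subgroup G} {g : G}
    (hg : g ∈ normalizer (H : Set G)) : H.map (MulAut.conj g).toMonoidHom = H :=
  mem_normalizer_iff_map_conj_eq.mp hg

variable {B : Type*} [Group B] (f : G →* B) {H : Subgroup G}

theorem map_conj_eq_of_ker_le_normalizer (hH : f.ker ≤ normalizer (H : Set G)) {g g' : G}
    (hgg' : f g = f g') :
    H.map (MulAut.conj g).toMonoidHom = H.map (MulAut.conj g').toMonoidHom := by
  have hker : g'⁻¹ * g ∈ f.ker := by simp [hgg']
  calc H.map (MulAut.conj g).toMonoidHom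
      = (H.map (MulAut.conj (g'⁻¹ * g)).toMonoidHom).map (MulAut.conj g').toMonoidHom := by
        rw [map_conj_map_conj, mul_inv_cancel_left]
    _ = H.map (MulAut.conj g').toMonoidHom := by
        rw [map_conj_eq_self_of_mem_normalizer (hH hker)]

theorem iSup_map_conj_eq_normalClosure (hH : f.ker ≤ normalizer (H : Set G)) (σ : B → G)
    (hσ : ∀ b, f (σ b) = b) :
    ⨆ b, H.map (MulAut.conj (σ b)).toMonoidHom = normalClosure (H : Set G) := by
  set S := ⨆ b, H.map (MulAut.conj (σ b)).toMonoidHom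
  have hS : S.Normal := by
    refine normal_iff_map_conj_eq.mpr fun g => ?_
    change S.map (MulAut.conj g).toMonoidHom = S
    calc S.map (MulAut.conj g).toMonoidHom
        = ⨆ b, H.map (MulAut.conj (σ (f g * b))).toMonoidHom := by
          refine (map_iSup _ _).trans (iSup_congr fun b => ?_)
          rw [map_conj_map_conj]
          exact map_conj_eq_of_ker_le_normalizer f hH (by simp [hσ])
      _ = S := (Equiv.mulLeft (f g)).iSup_comp
          (g := fun b => H.map (MulAut.conj (σ b)).toMonoidHom)
  have hHS : H ≤ S := by
    rw [← map_conj_eq_self_of_mem_normalizer (hH (by simp [hσ] : σ 1 ∈ f.ker))]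
    exact le_iSup (fun b => H.map (MulAut.conj (σ b)).toMonoidHom) 1
  refine le_antisymm (iSup_le fun b => ?_) (@normalClosure_le_normal _ _ _ S hS hHS)
  rintro _ ⟨n, hn, rfl⟩
  exact normalClosure_normal.conj_mem n (subset_normalClosure hn) (σ b)

end Subgroup

namespace IsWreathLikeProduct

open Subgroup

variable {W A B I : Type*} [Group W] [Group A] [Group B] [MulAction B I]
  {𝒜 : I → Subgroup W} {ε : W →* B}

theorem ker_le_normalizer (hW : IsWreathLikeProduct W A B I 𝒜 ε) {i : I} {N : Subgroup W}
    (hN : N ≤ 𝒜 i) (hNnormal : 𝒜 i ≤ normalizer (N : Set W)) :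
    ε.ker ≤ normalizer (N : Set W) := by
  rw [← hW.base_eq]
  refine iSup_le fun j => ?_
  rcases eq_or_ne j i with rfl | hji
  · exact hNnormal
  · refine le_trans (fun x hx => ?_) (centralizer_le_normalizer _)
    exact mem_centralizer_iff.mpr fun y hy => (hW.commute j i hji x hx y (hN hy)).eq.symm

theorem map_conj_le (hW : IsWreathLikeProduct W A B I 𝒜 ε) (w : W) {i : I} {N : Subgroup W}
    (hN : N ≤ 𝒜 i) : N.map (MulAut.conj w).toMonoidHom ≤ 𝒜 (ε w • i) :=
  hW.conj_eq w i ▸ map_mono hN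

end IsWreathLikeProduct

/-- Let `W` be a regular wreath-like product of `A` and `B`, identify `A`
with `𝒜 1`, and let `N` be a normal subgroup of `A = 𝒜 1`. Then:
(i) for `u, u' ∈ W` with `ε u = ε u'` we have `uNu⁻¹ = u'Nu'⁻¹`, so for `b ∈ B` the
subgroup `N_b = uNu⁻¹` (for any `u` with `ε u = b`) is well defined; and
(ii) for any choice `σ : B → W` of preimages (`ε (σ b) = b`), the family
`N_b = (σ b) N (σ b)⁻¹` pairwise commutes elementwise, is independent, and generates the
normal closure `⟪N⟫` of `N` in `W`, i.e. `⟪N⟫` is the internal direct sum of the `N_b`. -/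
theorem normalClosure_eq_directSum_of_conjugates
    {W A B : Type*} [Group W] [Group A] [Group B]
    (𝒜 : B → Subgroup W) (ε : W →* B)
    (hW : IsWreathLikeProduct W A B B 𝒜 ε)
    (N : Subgroup W) (hN : N ≤ 𝒜 (1 : B))
    (hNnormal : ∀ a ∈ 𝒜 (1 : B), ∀ n ∈ N, a * n * a⁻¹ ∈ N) :
    (∀ u u' : W, ε u = ε u' →
      Subgroup.map (MulAut.conj u).toMonoidHom N
        = Subgroup.map (MulAut.conj u').toMonoidHom N)
    ∧ ∀ σ : B → W, (∀ b : B, ε (σ b) = b) →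
        (∀ b c : B, b ≠ c →
          ∀ x ∈ Subgroup.map (MulAut.conj (σ b)).toMonoidHom N,
          ∀ y ∈ Subgroup.map (MulAut.conj (σ c)).toMonoidHom N, Commute x y)
        ∧ (∀ b : B, Disjoint (Subgroup.map (MulAut.conj (σ b)).toMonoidHom N)
            (⨆ (c : B) (_ : c ≠ b), Subgroup.map (MulAut.conj (σ c)).toMonoidHom N))
        ∧ (⨆ b : B, Subgroup.map (MulAut.conj (σ b)).toMonoidHom N)
            = Subgroup.normalClosure (N : Set W) := by
  have hker := hW.ker_le_normalizer hN (Subgroup.le_normalizer_of_forall_conj_mem hNnormal)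
  refine ⟨fun u u' => Subgroup.map_conj_eq_of_ker_le_normalizer ε hker, fun σ hσ => ?_⟩
  have hle (b : B) : N.map (MulAut.conj (σ b)).toMonoidHom ≤ 𝒜 b := by
    simpa [hσ] using hW.map_conj_le (σ b) hN
  exact ⟨fun b c hbc x hx y hy => hW.commute b c hbc x (hle b hx) y (hle c hy),
    fun b => (hW.indep b).mono (hle b) (iSup₂_mono fun c _ => hle c),
    Subgroup.iSup_map_conj_eq_normalClosure ε hker σ hσ⟩
end

section
/- Let A and A' be abelian groups, let B and B' be groups having no nontrivial abelian normal subgroups, and let W (respectively W') be a wreath-like product of A and B corresponding to an action B ↷ I (respectively of A' and B' corresponding to an action B' ↷ I'), with canonical homomorphisms ε: W → B and ε': W' → B'. Then every group isomorphism φ: W → W' maps the base ker ε onto the base ker ε'; in particular, the bases ⊕_{i∈I} A and ⊕_{i'∈I'} A' are isomorphic as groups. -/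
/-- The base of a wreath-like product with abelian `A` is abelian. -/
lemma base_comm_aux {W A B I : Type*} [Group W] [CommGroup A] [Group B] [MulAction B I]
    (𝒜 : I → Subgroup W) (ε : W →* B) (hW : IsWreathLikeProduct W A B I 𝒜 ε) :
    ∀ x ∈ ε.ker, ∀ y ∈ ε.ker, x * y = y * x := by
  intro x hx y hy
  rw [← hW.base_eq] at hx hy
  refine Subgroup.iSup_induction 𝒜 (C := fun x => ∀ y ∈ ⨆ i, 𝒜 i, x * y = y * x) hx
    ?_ (by simp) (fun a b ha hb y hy => by
      show (a*b) * y = y * (a*b); rw [mul_assoc, hb y hy, ← mul_assoc, ha y hy, mul_assoc]) y hy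
  intro i x hxi y hy
  refine Subgroup.iSup_induction 𝒜 (C := fun y => x * y = y * x) hy ?_ (by simp)
    (fun a b ha hb => by show x * (a*b) = (a*b) * x; rw [← mul_assoc, ha, mul_assoc, hb, ← mul_assoc])
  intro j y hyj
  rcases eq_or_ne i j with rfl | hij
  · obtain ⟨e⟩ := hW.isoA i
    have : (⟨x, hxi⟩ : 𝒜 i) * ⟨y, hyj⟩ = ⟨y, hyj⟩ * ⟨x, hxi⟩ := by
      apply e.injective; rw [map_mul, map_mul, mul_comm]
    exact Subtype.ext_iff.mp this
  · exact hW.commute i j hij x hxi y hyj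

/-- The image of the base under an isomorphism lands in the other base. -/
lemma base_map_le_aux {W W' A B B' I : Type*} [Group W] [Group W'] [CommGroup A]
    [Group B] [Group B'] [MulAction B I]
    (hB' : ∀ K : Subgroup B', K.Normal → (∀ x ∈ K, ∀ y ∈ K, x * y = y * x) → K = ⊥)
    (𝒜 : I → Subgroup W) (ε : W →* B) (hW : IsWreathLikeProduct W A B I 𝒜 ε)
    (ε' : W' →* B') (hε' : Function.Surjective ε') (φ : W ≃* W') :
    Subgroup.map φ.toMonoidHom ε.ker ≤ ε'.ker := by
  set M : Subgroup W' := Subgroup.map φ.toMonoidHom ε.ker with hM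
  have hMnormal : M.Normal := ε.normal_ker.map _ φ.surjective
  have hMcomm : ∀ x ∈ M, ∀ y ∈ M, x * y = y * x := by
    rintro _ ⟨x, hx, rfl⟩ _ ⟨y, hy, rfl⟩
    rw [← map_mul, ← map_mul, base_comm_aux 𝒜 ε hW x hx y hy]
  have hK : Subgroup.map ε' M = ⊥ := by
    refine hB' _ (hMnormal.map ε' hε') ?_
    rintro _ ⟨x, hx, rfl⟩ _ ⟨y, hy, rfl⟩
    rw [← map_mul, ← map_mul, hMcomm x hx y hy]
  intro x hx
  have : ε' x ∈ Subgroup.map ε' M := ⟨x, hx, rfl⟩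
  rw [hK] at this
  exact this

/-- Let `A, A'` be abelian, let `B, B'` have no nontrivial abelian normal
subgroups, and let `W ∈ WR(A, B ↷ I)`, `W' ∈ WR(A', B' ↷ I')` with canonical homomorphisms
`ε, ε'`. Then every isomorphism `φ : W ≃ W'` maps the base `ker ε` onto the base `ker ε'`;
in particular the bases are isomorphic as groups. -/
theorem iso_maps_base_onto_base
    {W W' A A' B B' I I' : Type*} [Group W] [Group W'] [CommGroup A] [CommGroup A']
    [Group B] [Group B'] [MulAction B I] [MulAction B' I']
    (hB : ∀ K : Subgroup B, K.Normal → (∀ x ∈ K, ∀ y ∈ K, x * y = y * x) → K = ⊥)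
    (hB' : ∀ K : Subgroup B', K.Normal → (∀ x ∈ K, ∀ y ∈ K, x * y = y * x) → K = ⊥)
    (𝒜 : I → Subgroup W) (ε : W →* B)
    (hW : IsWreathLikeProduct W A B I 𝒜 ε)
    (𝒜' : I' → Subgroup W') (ε' : W' →* B')
    (hW' : IsWreathLikeProduct W' A' B' I' 𝒜' ε')
    (φ : W ≃* W') :
    Subgroup.map φ.toMonoidHom ε.ker = ε'.ker ∧ Nonempty (ε.ker ≃* ε'.ker) := by
  have h1 : Subgroup.map φ.toMonoidHom ε.ker ≤ ε'.ker :=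
    base_map_le_aux hB' 𝒜 ε hW ε' hW'.surjective φ
  have h2 : Subgroup.map φ.symm.toMonoidHom ε'.ker ≤ ε.ker :=
    base_map_le_aux hB 𝒜' ε' hW' ε hW.surjective φ.symm
  have h3 : Subgroup.map φ.toMonoidHom (Subgroup.map φ.symm.toMonoidHom ε'.ker)
      ≤ Subgroup.map φ.toMonoidHom ε.ker := Subgroup.map_mono h2
  rw [Subgroup.map_map] at h3
  have h4 : (φ.toMonoidHom.comp φ.symm.toMonoidHom) = MonoidHom.id W' := by
    ext x; simp
  rw [h4, Subgroup.map_id] at h3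
  have heq : Subgroup.map φ.toMonoidHom ε.ker = ε'.ker := le_antisymm h1 h3
  refine ⟨heq, ⟨(φ.subgroupMap ε.ker).trans (MulEquiv.subgroupCongr heq)⟩⟩
end

section
/- Let B and B' be groups having no nontrivial abelian normal subgroups, let I and I' be nonempty sets on which B and B' act respectively, and let P and P' be two distinct sets of prime numbers. Let W be a wreath-like product of ⊕_{p∈P} ℤ/pℤ and B corresponding to B ↷ I, and let W' be a wreath-like product of ⊕_{p∈P'} ℤ/pℤ and B' corresponding to B' ↷ I'. Then W and W' are not isomorphic as groups. -/
section Aux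

variable {W B I : Type*} [Group W] [Group B] [MulAction B I]

/-- The base of a wreath-like product with abelian fibers is abelian. -/
lemma IsWreathLikeProduct.base_commute {P : Set ℕ}
    {𝒜 : I → Subgroup W} {ε : W →* B}
    (hW : IsWreathLikeProduct W (Multiplicative (DirectSum P fun p => ZMod p)) B I 𝒜 ε) :
    ∀ x ∈ (⨆ i, 𝒜 i : Subgroup W), ∀ y ∈ (⨆ i, 𝒜 i : Subgroup W), Commute x y := by
  have habel : ∀ i : I, ∀ x ∈ 𝒜 i, ∀ y ∈ 𝒜 i, Commute x y := by
    intro i x hx y hy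
    obtain ⟨e⟩ := hW.isoA i
    have h : (⟨x, hx⟩ : 𝒜 i) * ⟨y, hy⟩ = ⟨y, hy⟩ * ⟨x, hx⟩ :=
      e.injective (by rw [map_mul, map_mul, mul_comm])
    simpa [Commute, SemiconjBy, Subtype.ext_iff] using h
  have key : ∀ i : I, ∀ x ∈ 𝒜 i, ∀ y ∈ (⨆ j, 𝒜 j : Subgroup W), Commute x y := by
    intro i x hx y hy
    refine Subgroup.iSup_induction (C := fun z => Commute x z) 𝒜 hy
      (fun j z hzj => ?_) (Commute.one_right x) (fun a b ha hb => ha.mul_right hb)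
    rcases eq_or_ne i j with rfl | hij
    · exact habel i x hx z hzj
    · exact hW.commute i j hij x hx z hzj
  intro x hx y hy
  exact Subgroup.iSup_induction (C := fun z => Commute z y) 𝒜 hx
    (fun i z hzi => key i z hzi y hy)
    (Commute.one_left y) (fun a b ha hb => ha.mul_left hb)

/-- If `p` is a prime not in `P`, no element of the base has order divisible by `p`. -/
lemma IsWreathLikeProduct.not_dvd_orderOf {P : Set ℕ} (hP : ∀ q ∈ P, q.Prime)
    {𝒜 : I → Subgroup W} {ε : W →* B}
    (hW : IsWreathLikeProduct W (Multiplicative (DirectSum P fun p => ZMod p)) B I 𝒜 ε)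
    {p : ℕ} (hp : p.Prime) (hpP : p ∉ P) :
    ∀ x ∈ (⨆ i, 𝒜 i : Subgroup W), ¬ p ∣ orderOf x := by
  classical
  have hgen : ∀ i : I, ∀ x, ∀ hx : x ∈ 𝒜 i, ¬ p ∣ orderOf x := by
    intro i x hx
    obtain ⟨e⟩ := hW.isoA i
    have h1 : orderOf x = orderOf (e ⟨x, hx⟩) := by
      rw [MulEquiv.orderOf_eq, Subgroup.orderOf_mk]
    set a : DirectSum P fun q => ZMod q := (e ⟨x, hx⟩).toAdd with ha
    have h2 : orderOf (e ⟨x, hx⟩) = addOrderOf a := by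
      rw [← orderOf_ofAdd_eq_addOrderOf]; rfl
    set n : ℕ := ∏ q ∈ a.support, (q : ℕ) with hn
    have hdvd : addOrderOf a ∣ n := by
      apply addOrderOf_dvd_of_nsmul_eq_zero
      refine DFinsupp.ext fun q => ?_
      have hq : (n • a) q = n • (a q) :=
        map_nsmul (DFinsupp.evalAddMonoidHom q) n a
      rw [DFinsupp.zero_apply, hq]
      by_cases hqs : q ∈ a.support
      · have hqn : (q : ℕ) ∣ n := Finset.dvd_prod_of_mem _ hqs
        have hz : ((n : ZMod (q : ℕ))) = 0 :=
          (ZMod.natCast_eq_zero_iff n q).mpr hqn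
        rw [nsmul_eq_mul, hz, zero_mul]
      · rw [DFinsupp.notMem_support_iff.mp hqs, smul_zero]
    have hpn : ¬ p ∣ n := by
      have hcop : Nat.Coprime p n := by
        refine Nat.Coprime.prod_right fun q _ => ?_
        exact (Nat.coprime_primes hp (hP q q.2)).mpr
          (fun hpq => hpP (hpq ▸ q.2))
      exact (Nat.Prime.coprime_iff_not_dvd hp).mp hcop
    rw [h1, h2]
    exact fun hpd => hpn (hpd.trans hdvd)
  intro x hx
  refine Subgroup.iSup_induction' (C := fun z _ => ¬ p ∣ orderOf z) 𝒜 hgen ?_ ?_ hx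
  · show ¬ p ∣ orderOf (1 : W)
    rw [orderOf_one, Nat.dvd_one]
    exact hp.ne_one
  · intro y z hym hzm hy hz
    show ¬ p ∣ orderOf (y * z)
    intro hdvd
    have hc : Commute y z :=
      hW.base_commute y hym z hzm
    have hmul := hc.orderOf_mul_dvd_mul_orderOf
    rcases (Nat.Prime.dvd_mul hp).mp (hdvd.trans hmul) with h | h
    · exact hy h
    · exact hz h

/-- For `p ∈ P`, each fiber contains an element of order exactly `p`. -/
lemma IsWreathLikeProduct.exists_orderOf_eq {P : Set ℕ}
    {𝒜 : I → Subgroup W} {ε : W →* B}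
    (hW : IsWreathLikeProduct W (Multiplicative (DirectSum P fun p => ZMod p)) B I 𝒜 ε)
    {p : ℕ} (hp : p ∈ P) (i : I) :
    ∃ x ∈ 𝒜 i, orderOf x = p := by
  obtain ⟨e⟩ := hW.isoA i
  let a : DirectSum P fun q => ZMod q := DirectSum.of (fun q : P => ZMod q) ⟨p, hp⟩ 1
  let m : 𝒜 i := e.symm (Multiplicative.ofAdd a)
  refine ⟨(m : W), m.2, ?_⟩
  have h0 : orderOf (m : W) = orderOf m := Subgroup.orderOf_coe m
  have h1 : orderOf m = orderOf (Multiplicative.ofAdd a) :=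
    e.symm.orderOf_eq (Multiplicative.ofAdd a)
  have h2 : addOrderOf a = addOrderOf (1 : ZMod p) :=
    addOrderOf_injective (DirectSum.of (fun q : P => ZMod q) ⟨p, hp⟩)
      (DirectSum.of_injective _) (1 : ZMod p)
  rw [h0, h1, orderOf_ofAdd_eq_addOrderOf, h2, ZMod.addOrderOf_one]

end Aux

/-- The key step: an isomorphism between the two wreath-like products transports an
element of order `p ∈ P \ P'` from the base of `W` into the base of `W'`, which is
impossible. -/
lemma IsWreathLikeProduct.key_false
    {W W' B B' I I' : Type*} [Group W] [Group W'] [Group B] [Group B']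
    [MulAction B I] [MulAction B' I'] [Nonempty I]
    (hB' : ∀ K : Subgroup B', K.Normal → (∀ x ∈ K, ∀ y ∈ K, x * y = y * x) → K = ⊥)
    {P P' : Set ℕ} (hP : ∀ q ∈ P, q.Prime) (hP' : ∀ q ∈ P', q.Prime)
    {p : ℕ} (hpP : p ∈ P) (hpP' : p ∉ P')
    {𝒜 : I → Subgroup W} {ε : W →* B}
    (hW : IsWreathLikeProduct W (Multiplicative (DirectSum P fun p => ZMod p)) B I 𝒜 ε)
    {𝒜' : I' → Subgroup W'} {ε' : W' →* B'}
    (hW' : IsWreathLikeProduct W' (Multiplicative (DirectSum P' fun p => ZMod p)) B' I' 𝒜' ε')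
    (φ : W ≃* W') : False := by
  obtain ⟨i⟩ := ‹Nonempty I›
  obtain ⟨x, hx, hox⟩ := hW.exists_orderOf_eq hpP i
  have hxN : x ∈ ε.ker := hW.base_eq ▸ Subgroup.mem_iSup_of_mem i hx
  set f : W →* B' := ε'.comp φ.toMonoidHom with hf
  have hfsurj : Function.Surjective f := hW'.surjective.comp φ.surjective
  set L : Subgroup B' := Subgroup.map f ε.ker with hL
  have hLnormal : L.Normal := (MonoidHom.normal_ker ε).map f hfsurj
  have hLab : ∀ x ∈ L, ∀ y ∈ L, x * y = y * x := by
    rintro _ ⟨a, ha, rfl⟩ _ ⟨b, hb, rfl⟩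
    rw [← map_mul, ← map_mul]
    congr 1
    have ha' : a ∈ (⨆ j, 𝒜 j : Subgroup W) := hW.base_eq ▸ ha
    have hb' : b ∈ (⨆ j, 𝒜 j : Subgroup W) := hW.base_eq ▸ hb
    exact hW.base_commute a ha' b hb'
  have hLbot : L = ⊥ := hB' L hLnormal hLab
  have hker : φ x ∈ ε'.ker := by
    have hm : f x ∈ L := ⟨x, hxN, rfl⟩
    rw [hLbot, Subgroup.mem_bot] at hm
    exact hm
  have hx' : φ x ∈ (⨆ j, 𝒜' j : Subgroup W') := by
    rw [hW'.base_eq]; exact hker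
  have hnd := hW'.not_dvd_orderOf hP' (hP p hpP) hpP' (φ x) hx'
  apply hnd
  rw [φ.orderOf_eq, hox]


/-- Let `B, B'` have no nontrivial abelian normal subgroups, acting on
nonempty sets `I, I'`, and let `P ≠ P'` be two distinct sets of primes. If
`W ∈ WR(⊕_{p ∈ P} ℤ/pℤ, B ↷ I)` and `W' ∈ WR(⊕_{p ∈ P'} ℤ/pℤ, B' ↷ I')`, then `W` and
`W'` are not isomorphic. -/
theorem not_iso_of_distinct_prime_sets
    {W W' B B' I I' : Type*} [Group W] [Group W'] [Group B] [Group B']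
    [MulAction B I] [MulAction B' I'] [Nonempty I] [Nonempty I']
    (hB : ∀ K : Subgroup B, K.Normal → (∀ x ∈ K, ∀ y ∈ K, x * y = y * x) → K = ⊥)
    (hB' : ∀ K : Subgroup B', K.Normal → (∀ x ∈ K, ∀ y ∈ K, x * y = y * x) → K = ⊥)
    (P P' : Set ℕ) (hP : ∀ p ∈ P, p.Prime) (hP' : ∀ p ∈ P', p.Prime) (hPP' : P ≠ P')
    (𝒜 : I → Subgroup W) (ε : W →* B)
    (hW : IsWreathLikeProduct W (Multiplicative (DirectSum P fun p => ZMod p)) B I 𝒜 ε)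
    (𝒜' : I' → Subgroup W') (ε' : W' →* B')
    (hW' : IsWreathLikeProduct W' (Multiplicative (DirectSum P' fun p => ZMod p)) B' I' 𝒜' ε') :
    IsEmpty (W ≃* W') := by
  constructor
  intro φ
  obtain ⟨p, hp⟩ : ∃ p, ¬ (p ∈ P ↔ p ∈ P') := by
    by_contra h
    push_neg at h
    exact hPP' (Set.ext h)
  by_cases hpP : p ∈ P
  · have hpP' : p ∉ P' := fun h => hp ⟨fun _ => h, fun _ => hpP⟩
    exact hW.key_false hB' hP hP' hpP hpP' hW' φ
  · have hpP' : p ∈ P' := by tauto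
    exact hW'.key_false hB hP' hP hpP' hpP hW φ.symm
end

section
/- Let W be a regular wreath-like product of groups A and B with canonical homomorphism ε: W → B. If the extension splits, i.e., there exists a group homomorphism s: B → W with ε ∘ s = id_B, then W is isomorphic to the restricted wreath product A wr B, i.e., the semidirect product (⊕_{b∈B} A) ⋊ B where B acts on the direct sum ⊕_{b∈B} A by left translation of the index. -/
/-- Left translation of the index on finitely supported functions, as an automorphism. -/
def wreathTranslate {A B : Type*} [Group A] [Group B] (b : B) :
    FinSuppFun B A ≃* FinSuppFun B A where
  toFun f := ⟨fun x => (f : B → A) (b⁻¹ * x), by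
      have hf : (Function.mulSupport (f : B → A)).Finite := f.2
      have h : Function.mulSupport (fun x => (f : B → A) (b⁻¹ * x))
          ⊆ (fun y => b * y) '' Function.mulSupport (f : B → A) := by
        intro x hx
        exact ⟨b⁻¹ * x, hx, by group⟩
      exact (hf.image _).subset h⟩
  invFun f := ⟨fun x => (f : B → A) (b * x), by
      have hf : (Function.mulSupport (f : B → A)).Finite := f.2
      have h : Function.mulSupport (fun x => (f : B → A) (b * x))
          ⊆ (fun y => b⁻¹ * y) '' Function.mulSupport (f : B → A) := by
        intro x hx
        exact ⟨b * x, hx, by group⟩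
      exact (hf.image _).subset h⟩
  left_inv f := by
    apply Subtype.ext; funext x; simp
  right_inv f := by
    apply Subtype.ext; funext x; simp
  map_mul' f g := by
    apply Subtype.ext; funext x; rfl

/-- The action of `B` on `⊕_{b ∈ B} A` by left translation of the index. -/
def wreathAction (A B : Type*) [Group A] [Group B] : B →* MulAut (FinSuppFun B A) where
  toFun b := wreathTranslate b
  map_one' := by
    apply MulEquiv.ext; intro f; apply Subtype.ext; funext x; simp [wreathTranslate]
  map_mul' b c := by
    apply MulEquiv.ext; intro f; apply Subtype.ext; funext x
    simp [wreathTranslate, mul_assoc]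

/-- The restricted wreath product `A wr B = (⊕_{b ∈ B} A) ⋊ B`, where `B` acts on the
direct sum by left translation of the index: `(b • f) x = f (b⁻¹ x)`. -/
abbrev RestrictedWreathProduct (A B : Type*) [Group A] [Group B] :=
  SemidirectProduct (FinSuppFun B A) B (wreathAction A B)

/-! Transporting one isomorphism `A ≃* 𝒜 1` along the splitting `s` gives embeddings
`ι b : A → 𝒜 b` with `s b * ι c a * (s b)⁻¹ = ι (b * c) a`. As the factors `𝒜 b` commute and
are independent, `f ↦ ∏_b ι b (f b)` is an injective homomorphism from `⊕_{b ∈ B} A` onto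
`ker ε` which turns left translation of the index into conjugation by `s`. Hence `W` is a split
extension of `B` by `⊕_{b ∈ B} A` whose conjugation action is the translation action, i.e. the
semidirect product `A wr B`. -/

open Function

namespace FinSuppFun

variable {I A : Type*} [Group A]

lemma mulSupport_finite (f : FinSuppFun I A) : (mulSupport (f : I → A)).Finite := f.2

noncomputable def support (f : FinSuppFun I A) : Finset I := (mulSupport_finite f).toFinset

lemma mem_support {f : FinSuppFun I A} {i : I} : i ∈ support f ↔ (f : I → A) i ≠ 1 :=
  (mulSupport_finite f).mem_toFinset

lemma mulSupport_subset_support (f : FinSuppFun I A) :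
    mulSupport (f : I → A) ⊆ support f := fun _ hi => mem_support.2 hi

lemma mulSingle_mem [DecidableEq I] (i : I) (a : A) : Pi.mulSingle i a ∈ FinSuppFun I A :=
  (Set.finite_singleton i).subset Pi.mulSupport_mulSingle_subset

variable {W : Type*} [Group W] (φ : I → A →* W)
  (hφ : Pairwise fun i j => ∀ a b, Commute (φ i a) (φ j b))

noncomputable def noncommProdOn (T : Finset I) (f : I → A) : W :=
  T.noncommProd (fun i => φ i (f i)) fun _ _ _ _ hij => hφ hij _ _

lemma noncommProdOn_eq_of_subset [DecidableEq I] {S T : Finset I} (hST : S ⊆ T) {f : I → A}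
    (hf : mulSupport f ⊆ S) : noncommProdOn φ hφ T f = noncommProdOn φ hφ S f := by
  have h_sdiff : noncommProdOn φ hφ (T \ S) f = 1 := by
    refine (Finset.noncommProd_eq_pow_card _ _ _ 1 fun i hi => ?_).trans (one_pow _)
    rw [notMem_mulSupport.1 fun h => (Finset.mem_sdiff.1 hi).2 (hf h), map_one]
  calc noncommProdOn φ hφ T f = noncommProdOn φ hφ (S ∪ T \ S) f := by
        rw [Finset.union_sdiff_of_subset hST]
    _ = noncommProdOn φ hφ S f * noncommProdOn φ hφ (T \ S) f :=
        Finset.noncommProd_union_of_disjoint Finset.disjoint_sdiff _ _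
    _ = noncommProdOn φ hφ S f := by rw [h_sdiff, mul_one]

lemma noncommProdOn_eq_of_mulSupport_subset {S T : Finset I} {f : I → A}
    (hS : mulSupport f ⊆ S) (hT : mulSupport f ⊆ T) :
    noncommProdOn φ hφ S f = noncommProdOn φ hφ T f := by
  classical
  have hST : mulSupport f ⊆ ↑(S ∩ T) := by simpa using And.intro hS hT
  rw [noncommProdOn_eq_of_subset φ hφ Finset.inter_subset_left hST,
    noncommProdOn_eq_of_subset φ hφ Finset.inter_subset_right hST]

lemma noncommProdOn_map_equiv (e : I ≃ I) (g : W) (he : ∀ i a, φ (e i) a = g * φ i a * g⁻¹)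
    (T : Finset I) {f f' : I → A} (hf' : ∀ i, f' (e i) = f i) :
    noncommProdOn φ hφ (T.map e.toEmbedding) f' = g * noncommProdOn φ hφ T f * g⁻¹ := by
  calc noncommProdOn φ hφ (T.map e.toEmbedding) f'
      = T.noncommProd (fun i => MulAut.conj g (φ i (f i)))
          fun _ _ _ _ hij => (hφ hij _ _).map _ := by
        simp only [noncommProdOn, Finset.noncommProd, Finset.map_val, Multiset.map_map]
        congr 1
        exact Multiset.map_congr rfl fun i _ => by simp [he, hf']
    _ = g * noncommProdOn φ hφ T f * g⁻¹ := (Finset.map_noncommProd _ _ _ _).symm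

noncomputable def noncommProd : FinSuppFun I A →* W where
  toFun f := noncommProdOn φ hφ (support f) f
  map_one' := by
    rw [noncommProdOn_eq_of_mulSupport_subset φ hφ (mulSupport_subset_support _)
      (T := ∅) (by simp [mulSupport_one])]
    rfl
  map_mul' f g := by
    classical
    set T := support f ∪ support g
    have hf : mulSupport (f : I → A) ⊆ T :=
      (mulSupport_subset_support f).trans (by simp [T])
    have hg : mulSupport (g : I → A) ⊆ T :=
      (mulSupport_subset_support g).trans (by simp [T])
    have hfg : mulSupport ((f * g : FinSuppFun I A) : I → A) ⊆ T :=
      (mulSupport_mul (f : I → A) g).trans (Set.union_subset_union hf hg |>.trans (by simp))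
    rw [noncommProdOn_eq_of_mulSupport_subset φ hφ (mulSupport_subset_support _) hfg,
      noncommProdOn_eq_of_mulSupport_subset φ hφ (mulSupport_subset_support _) hf,
      noncommProdOn_eq_of_mulSupport_subset φ hφ (mulSupport_subset_support _) hg]
    unfold noncommProdOn
    simp only [Subgroup.coe_mul, Pi.mul_apply, map_mul]
    exact Finset.noncommProd_mul_distrib _ _ (fun _ _ _ _ hij => hφ hij _ _)
      (fun _ _ _ _ hij => hφ hij _ _) (fun _ _ _ _ hij => hφ hij _ _)

lemma noncommProd_eq_noncommProdOn {f : FinSuppFun I A} {T : Finset I}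
    (hT : mulSupport (f : I → A) ⊆ T) :
    noncommProd φ hφ f = noncommProdOn φ hφ T f :=
  noncommProdOn_eq_of_mulSupport_subset φ hφ (mulSupport_subset_support f) hT

lemma noncommProd_mulSingle [DecidableEq I] (i : I) (a : A) :
    noncommProd φ hφ ⟨Pi.mulSingle i a, mulSingle_mem i a⟩ = φ i a := by
  rw [noncommProd_eq_noncommProdOn φ hφ (T := {i})
    (by simpa using Pi.mulSupport_mulSingle_subset)]
  simp [noncommProdOn, Finset.noncommProd_singleton]

lemma range_noncommProd : (noncommProd φ hφ).range = ⨆ i, (φ i).range := by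
  classical
  apply le_antisymm
  · rintro _ ⟨f, rfl⟩
    exact Subgroup.noncommProd_mem _ (fun _ _ _ _ hij => hφ hij _ _) fun i _ =>
      Subgroup.mem_iSup_of_mem i (MonoidHom.mem_range.2 ⟨_, rfl⟩)
  · refine iSup_le fun i => ?_
    rintro _ ⟨a, rfl⟩
    exact ⟨_, noncommProd_mulSingle φ hφ i a⟩

lemma noncommProd_injective (hinj : ∀ i, Injective (φ i))
    (hind : iSupIndep fun i => (φ i).range) : Injective (noncommProd φ hφ) := by
  refine (injective_iff_map_eq_one _).2 fun f hf => Subtype.ext <| funext fun i => ?_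
  by_contra hi
  change (f : I → A) i ≠ 1 at hi
  have h_one := Subgroup.eq_one_of_noncommProd_eq_one_of_iSupIndep _ _
    (fun _ _ _ _ hij => hφ hij _ _) _ hind
    (fun i _ => MonoidHom.mem_range.2 ⟨_, rfl⟩) hf i (mem_support.2 hi)
  exact hi ((hinj i).eq_iff.1 (h_one.trans (map_one _).symm))

lemma noncommProd_eq_conj_of_reindex (e : I ≃ I) (g : W)
    (he : ∀ i a, φ (e i) a = g * φ i a * g⁻¹) {f f' : FinSuppFun I A}
    (hf' : ∀ i, (f' : I → A) (e i) = (f : I → A) i) :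
    noncommProd φ hφ f' = g * noncommProd φ hφ f * g⁻¹ := by
  have h_supp : mulSupport (f' : I → A) ⊆ ↑((support f).map e.toEmbedding) := by
    intro i hi
    simpa [mem_support, ← hf' (e.symm i)] using hi
  exact (noncommProd_eq_noncommProdOn φ hφ h_supp).trans
    (noncommProdOn_map_equiv φ hφ e g he _ hf')

end FinSuppFun

namespace IsWreathLikeProduct

variable {W A B : Type*} [Group W] [Group A] [Group B] {𝒜 : B → Subgroup W} {ε : W →* B}
  (hW : IsWreathLikeProduct W A B B 𝒜 ε) (s : B →* W)

/-- The isomorphisms `𝒜 b ≃* A` provided by `hW` are unrelated to each other, so every factor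
is identified with `A` by transporting the one at `1` along the splitting `s`. -/
noncomputable def factorHom (b : B) : A →* W :=
  (MulAut.conj (s b)).toMonoidHom.comp
    ((𝒜 1).subtype.comp (Classical.choice (hW.isoA 1)).symm.toMonoidHom)

lemma factorHom_mul (b c : B) (a : A) :
    hW.factorHom s (b * c) a = s b * hW.factorHom s c a * (s b)⁻¹ := by
  simp [factorHom, mul_assoc]

lemma factorHom_injective (b : B) : Injective (hW.factorHom s b) :=
  (MulAut.conj (s b)).injective.comp <|
    Subtype.val_injective.comp (Classical.choice (hW.isoA 1)).symm.injective

lemma range_factorHom (hs : ∀ b, ε (s b) = b) (b : B) : (hW.factorHom s b).range = 𝒜 b := by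
  rw [factorHom, MonoidHom.range_comp, MonoidHom.range_comp,
    MonoidHom.range_eq_top_of_surjective _ (Classical.choice (hW.isoA 1)).symm.surjective,
    ← MonoidHom.range_eq_map, Subgroup.range_subtype, hW.conj_eq, hs, smul_eq_mul, mul_one]

lemma pairwise_commute_factorHom (hs : ∀ b, ε (s b) = b) :
    Pairwise fun b c => ∀ a a', Commute (hW.factorHom s b a) (hW.factorHom s c a') :=
  fun b c hbc a a' => hW.commute b c hbc _ (hW.range_factorHom s hs b ▸ ⟨a, rfl⟩)
    _ (hW.range_factorHom s hs c ▸ ⟨a', rfl⟩)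

noncomputable def baseHom (hs : ∀ b, ε (s b) = b) : FinSuppFun B A →* W :=
  FinSuppFun.noncommProd (hW.factorHom s) (hW.pairwise_commute_factorHom s hs)

lemma baseHom_injective (hs : ∀ b, ε (s b) = b) : Injective (hW.baseHom s hs) :=
  FinSuppFun.noncommProd_injective _ _ (hW.factorHom_injective s) <| by
    simp only [hW.range_factorHom s hs]
    exact hW.indep

lemma range_baseHom (hs : ∀ b, ε (s b) = b) : (hW.baseHom s hs).range = ε.ker := by
  rw [baseHom, FinSuppFun.range_noncommProd, ← hW.base_eq]
  simp only [hW.range_factorHom s hs]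

lemma baseHom_wreathAction (hs : ∀ b, ε (s b) = b) (b : B) (f : FinSuppFun B A) :
    hW.baseHom s hs (wreathAction A B b f) = s b * hW.baseHom s hs f * (s b)⁻¹ :=
  FinSuppFun.noncommProd_eq_conj_of_reindex _ _ (Equiv.mulLeft b) (s b)
    (hW.factorHom_mul s b) fun c => by
      simp [wreathAction, wreathTranslate]

noncomputable def groupExtension (hs : ∀ b, ε (s b) = b) :
    GroupExtension (FinSuppFun B A) W B where
  inl := hW.baseHom s hs
  rightHom := ε
  inl_injective := hW.baseHom_injective s hs
  range_inl_eq_ker_rightHom := hW.range_baseHom s hs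
  rightHom_surjective := hW.surjective

noncomputable def splitting (hs : ∀ b, ε (s b) = b) : (hW.groupExtension s hs).Splitting :=
  { s with rightInverse_rightHom := hs }

lemma conjAct_splitting (hs : ∀ b, ε (s b) = b) :
    (hW.splitting s hs).conjAct = wreathAction A B := by
  ext b f : 2
  apply (hW.groupExtension s hs).inl_injective
  rw [GroupExtension.Splitting.conjAct, MonoidHom.comp_apply,
    GroupExtension.inl_conjAct_comm]
  exact (hW.baseHom_wreathAction s hs b f).symm

end IsWreathLikeProduct

/-- If `W` is a regular wreath-like product of `A` and `B` whose defining
extension splits (there is a homomorphism `s : B → W` with `ε ∘ s = id`), then `W` is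
isomorphic to the restricted wreath product `A wr B = (⊕_{b ∈ B} A) ⋊ B`. -/
theorem regular_wreathLike_split_iso_wreathProduct
    {W A B : Type*} [Group W] [Group A] [Group B]
    (𝒜 : B → Subgroup W) (ε : W →* B)
    (hW : IsWreathLikeProduct W A B B 𝒜 ε)
    (s : B →* W) (hs : ∀ b : B, ε (s b) = b) :
    Nonempty (W ≃* RestrictedWreathProduct A B) := by
  show Nonempty (W ≃* FinSuppFun B A ⋊[wreathAction A B] B)
  rw [← hW.conjAct_splitting s hs]
  exact ⟨(hW.splitting s hs).semidirectProductMulEquiv.symm⟩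
end

section
/- Let W be a wreath-like product of groups A and B corresponding to an action of B on a set I, with subgroups (A_i)_{i∈I} and canonical homomorphism ε: W → B. Let a ∈ ker ε be a nontrivial element of the base and suppose there exists i ∈ I such that a does not belong to the subgroup generated by ⋃_{j∈I, j≠i} A_j (i.e., i lies in the support of a) and the orbit B·i is infinite. Then the conjugacy class of a in W is infinite. -/
/-- Any element of an `iSup` of subgroups lies in the sup over some finite subfamily. -/
lemma mem_finset_sup_of_mem_iSup {W : Type*} [Group W] {I : Type*} [DecidableEq I]
    (𝒜 : I → Subgroup W) {x : W} (hx : x ∈ ⨆ i : I, 𝒜 i) :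
    ∃ F : Finset I, x ∈ ⨆ j ∈ F, 𝒜 j := by
  have hdir : Directed (· ≤ ·) (fun F : Finset I => ⨆ j ∈ F, 𝒜 j) := by
    intro F G
    exact ⟨F ∪ G, biSup_mono (fun j hj => Finset.mem_union_left _ hj),
      biSup_mono (fun j hj => Finset.mem_union_right _ hj)⟩
  have : (⨆ i : I, 𝒜 i) = ⨆ F : Finset I, ⨆ j ∈ F, 𝒜 j := by
    apply le_antisymm
    · exact iSup_le fun i =>
        le_iSup_of_le {i} (le_iSup₂_of_le i (Finset.mem_singleton_self i) le_rfl)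
    · exact iSup_le fun F => iSup₂_le fun j _ => le_iSup 𝒜 j
  rw [this] at hx
  exact Subgroup.mem_iSup_of_directed hdir |>.mp hx

/-- Conjugation carries the "complement" subgroup at `i` to the one at `ε w • i`. -/
lemma conj_map_compl {W B I : Type*} [Group W] [Group B] [MulAction B I]
    {𝒜 : I → Subgroup W} {ε : W →* B}
    (hconj : ∀ (w : W) (i : I),
      Subgroup.map (MulAut.conj w).toMonoidHom (𝒜 i) = 𝒜 (ε w • i))
    (w : W) (i : I) :
    Subgroup.map (MulAut.conj w).toMonoidHom (⨆ (j : I) (_ : j ≠ i), 𝒜 j)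
      = ⨆ (j : I) (_ : j ≠ ε w • i), 𝒜 j := by
  rw [Subgroup.map_iSup]
  have : ∀ j : I, Subgroup.map (MulAut.conj w).toMonoidHom (⨆ (_ : j ≠ i), 𝒜 j)
      = ⨆ (_ : j ≠ i), 𝒜 (ε w • j) := by
    intro j
    by_cases h : j = i
    · simp [h, Subgroup.map_bot]
    · simp only [h, iSup_pos, ne_eq, not_false_eq_true]; exact hconj w j
  simp_rw [this]
  apply le_antisymm
  · refine iSup₂_le fun j hj => le_iSup₂_of_le (ε w • j) ?_ le_rfl
    intro h; exact hj (MulAction.injective (ε w) h)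
  · refine iSup₂_le fun k hk => le_iSup₂_of_le ((ε w)⁻¹ • k) ?_ ?_
    · intro h; apply hk; rw [← h, smul_inv_smul]
    · rw [smul_inv_smul]

/-- Let `W ∈ WR(A, B ↷ I)` with canonical homomorphism `ε`, and let
`a ∈ ker ε` be a nontrivial element of the base. If there is `i ∈ I` lying in the support
of `a` (i.e. `a` is not in the subgroup generated by the `𝒜 j` for `j ≠ i`) whose
`B`-orbit is infinite, then the conjugacy class of `a` in `W` is infinite. -/
theorem infinite_conjClass_of_base_element
    {W A B I : Type*} [Group W] [Group A] [Group B] [MulAction B I]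
    (𝒜 : I → Subgroup W) (ε : W →* B)
    (hW : IsWreathLikeProduct W A B I 𝒜 ε)
    (a : W) (haker : a ∈ ε.ker) (hane : a ≠ 1) (i : I)
    (hsupp : a ∉ ⨆ (j : I) (_ : j ≠ i), 𝒜 j)
    (horb : (MulAction.orbit B i).Infinite) :
    {x : W | ∃ w : W, w * a * w⁻¹ = x}.Infinite := by
  classical
  by_contra hfin
  rw [Set.not_infinite] at hfin
  set S := {x : W | ∃ w : W, w * a * w⁻¹ = x} with hS
  have hker : ∀ c ∈ S, c ∈ ε.ker := by
    rintro c ⟨w, rfl⟩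
    simp only [MonoidHom.mem_ker, map_mul, map_inv]
    rw [MonoidHom.mem_ker.mp haker]
    group
  have hTfin : ∀ c ∈ S, {p : I | c ∉ ⨆ (j : I) (_ : j ≠ p), 𝒜 j}.Finite := by
    intro c hc
    have hc' : c ∈ ⨆ i : I, 𝒜 i := hW.base_eq ▸ hker c hc
    obtain ⟨F, hF⟩ := mem_finset_sup_of_mem_iSup 𝒜 hc'
    apply Set.Finite.subset F.finite_toSet
    intro p hp
    by_contra hpF
    apply hp
    refine SetLike.le_def.mp ?_ hF
    refine iSup₂_le fun j hj => le_iSup₂_of_le j ?_ le_rfl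
    rintro rfl; exact hpF hj
  have hsub : MulAction.orbit B i ⊆ ⋃ c ∈ S, {p : I | c ∉ ⨆ (j : I) (_ : j ≠ p), 𝒜 j} := by
    rintro p ⟨b, rfl⟩
    obtain ⟨w, rfl⟩ := hW.surjective b
    have hcS : w * a * w⁻¹ ∈ S := ⟨w, rfl⟩
    refine Set.mem_biUnion hcS ?_
    intro hmem
    apply hsupp
    rw [← conj_map_compl hW.conj_eq w i] at hmem
    obtain ⟨y, hy, hy2⟩ := hmem
    have : y = a := by
      have : (MulAut.conj w) y = (MulAut.conj w) a := by
        simpa [MulAut.conj_apply] using hy2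
      exact (MulAut.conj w).injective this
    rwa [← this]
  exact horb (Set.Finite.subset (Set.Finite.biUnion hfin hTfin) hsub)
end
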